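/- arXiv:1403.3909 — 5 statements merged into one kernel-verified Lean document; each statement's English description precedes it below -/
import Mathlib

section
/- For any finite sets of indices J and J', the covariance of the product selection estimators is nonnegative: Cov(Ŝ(J), Ŝ(J')) ≥ 0. -/
/-!
Write `Ŝᵢ = Hᵢ / pᵢ`. As `Hᵢ ∈ {0, 1}`, `Ŝᵢ ^ k = Hᵢ / pᵢ ^ k`, so pulling the `ℱ_{i-1}`-measurable
factor out of the conditional expectation gives `E[Ŝᵢ ^ k | ℱ_{i-1}] = pᵢ ^ (1 - k)`: this is `1`
for `k = 1` and at least `1` for every `k ≥ 1`. Conditioning a product of adapted factors on the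
σ-algebra just before its largest index peels that factor off, so by induction `E[Ŝ(J)] = 1` and
`E[∏ᵢ Ŝᵢ ^ kᵢ] ≥ 1` whenever all `kᵢ ≥ 1`. Since
`Ŝ(J) Ŝ(J') = ∏_{i ∈ J ∪ J'} Ŝᵢ ^ (1 + [i ∈ J ∩ J'])`, `Cov(Ŝ(J), Ŝ(J')) = E[Ŝ(J) Ŝ(J')] - 1 ≥ 0`.
-/

open MeasureTheory Finset
open scoped ENNReal

lemma prod_mul_prod_eq_prod_union_pow {ι M : Type*} [CommMonoid M] [DecidableEq ι]
    (s t : Finset ι) (f : ι → M) :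
    (∏ i ∈ s, f i) * ∏ i ∈ t, f i = ∏ i ∈ s ∪ t, f i ^ (if i ∈ s ∩ t then 2 else 1) := by
  have hinter : ∏ i ∈ s ∩ t, f i = ∏ i ∈ s ∪ t, if i ∈ s ∩ t then f i else 1 := by
    rw [prod_ite_mem, inter_eq_right.2 (inter_subset_left.trans subset_union_left)]
  rw [← prod_union_inter, hinter, ← prod_mul_distrib]
  refine prod_congr rfl fun i _ ↦ ?_
  split_ifs <;> simp [pow_two]

section ProductsOfAdaptedFactors

variable {Ω : Type*} {m0 : MeasurableSpace Ω} {μ : Measure Ω}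

lemma memLp_top_prod {ι : Type*} {g : ι → Ω → ℝ} {s : Finset ι}
    (hg : ∀ i ∈ s, MemLp (g i) ∞ μ) : MemLp (fun ω ↦ ∏ i ∈ s, g i ω) ∞ μ := by
  simpa using MemLp.prod' (p := fun _ ↦ ∞) hg

lemma integral_mul_eq_integral_mul_condExp [IsFiniteMeasure μ] {m : MeasurableSpace Ω}
    (hm : m ≤ m0) {f g : Ω → ℝ} (hf : StronglyMeasurable[m] f) (hf_top : MemLp f ∞ μ)
    (hg : Integrable g μ) :
    ∫ ω, f ω * g ω ∂μ = ∫ ω, f ω * μ[g | m] ω ∂μ :=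
  calc ∫ ω, f ω * g ω ∂μ = ∫ ω, μ[f * g | m] ω ∂μ := (integral_condExp hm).symm
    _ = ∫ ω, f ω * μ[g | m] ω ∂μ :=
      integral_congr_ae <|
        condExp_mul_of_stronglyMeasurable_left hf (hg.mul_of_top_right hf_top) hg

variable [IsFiniteMeasure μ] (ℱ : Filtration ℕ m0) {g : ℕ → Ω → ℝ}

lemma integral_prod_insert_eq_integral_mul_condExp {a : ℕ} {s : Finset ℕ}
    (hs : ∀ i ∈ s, i < a) (hadapted : ∀ i ∈ s, StronglyMeasurable[ℱ i] (g i))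
    (hbdd : ∀ i ∈ s, MemLp (g i) ∞ μ) (hga : Integrable (g a) μ) :
    ∫ ω, ∏ i ∈ insert a s, g i ω ∂μ = ∫ ω, (∏ i ∈ s, g i ω) * μ[g a | ℱ (a - 1)] ω ∂μ := by
  have ha : a ∉ s := fun h ↦ (hs a h).false
  simp_rw [prod_insert ha, mul_comm (g a _)]
  refine integral_mul_eq_integral_mul_condExp (ℱ.le _) ?_ (memLp_top_prod hbdd) hga
  exact Finset.stronglyMeasurable_fun_prod s fun i hi ↦
    (hadapted i hi).mono (ℱ.mono (Nat.le_sub_one_of_lt (hs i hi)))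

variable [IsProbabilityMeasure μ]

lemma integral_prod_eq_one_of_condExp_eq_one (K : Finset ℕ)
    (hadapted : ∀ i ∈ K, StronglyMeasurable[ℱ i] (g i)) (hbdd : ∀ i ∈ K, MemLp (g i) ∞ μ)
    (hce : ∀ i ∈ K, μ[g i | ℱ (i - 1)] =ᵐ[μ] 1) :
    ∫ ω, ∏ i ∈ K, g i ω ∂μ = 1 := by
  induction K using Finset.induction_on_max with
  | empty => simp
  | insert a s hs ih =>
    obtain ⟨-, hadapted⟩ := (forall_mem_insert _ _ _).1 hadapted
    obtain ⟨hga, hbdd⟩ := (forall_mem_insert _ _ _).1 hbdd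
    obtain ⟨hcea, hce⟩ := (forall_mem_insert _ _ _).1 hce
    rw [integral_prod_insert_eq_integral_mul_condExp ℱ hs hadapted hbdd (hga.integrable le_top),
      ← ih hadapted hbdd hce]
    refine integral_congr_ae ?_
    filter_upwards [hcea] with ω hω
    simp [hω]

lemma one_le_integral_prod_of_one_le_condExp (K : Finset ℕ)
    (hadapted : ∀ i ∈ K, StronglyMeasurable[ℱ i] (g i)) (hbdd : ∀ i ∈ K, MemLp (g i) ∞ μ)
    (hnonneg : ∀ i ∈ K, 0 ≤ᵐ[μ] g i) (hce : ∀ i ∈ K, 1 ≤ᵐ[μ] μ[g i | ℱ (i - 1)]) :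
    1 ≤ ∫ ω, ∏ i ∈ K, g i ω ∂μ := by
  induction K using Finset.induction_on_max with
  | empty => simp
  | insert a s hs ih =>
    obtain ⟨-, hadapted⟩ := (forall_mem_insert _ _ _).1 hadapted
    obtain ⟨hga, hbdd⟩ := (forall_mem_insert _ _ _).1 hbdd
    obtain ⟨-, hnonneg⟩ := (forall_mem_insert _ _ _).1 hnonneg
    obtain ⟨hcea, hce⟩ := (forall_mem_insert _ _ _).1 hce
    have hprod_nonneg : ∀ᵐ ω ∂μ, 0 ≤ ∏ i ∈ s, g i ω := by
      filter_upwards [(ae_ball_iff s.countable_toSet).2 hnonneg] with ω hω using prod_nonneg hω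
    rw [integral_prod_insert_eq_integral_mul_condExp ℱ hs hadapted hbdd (hga.integrable le_top)]
    refine (ih hadapted hbdd hnonneg hce).trans <| integral_mono_ae
      ((memLp_top_prod hbdd).integrable le_top)
      (integrable_condExp.mul_of_top_right (memLp_top_prod hbdd)) ?_
    filter_upwards [hprod_nonneg, hcea] with ω h0 h1
    exact le_mul_of_one_le_right h0 h1

end ProductsOfAdaptedFactors

structure IsSelectionScheme {Ω : Type*} {m0 : MeasurableSpace Ω} (ℱ : Filtration ℕ m0)
    (μ : Measure Ω) (c : ℝ) (H p : ℕ → Ω → ℝ) : Prop where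
  pos : 0 < c
  measurable_H : ∀ i, 1 ≤ i → Measurable[ℱ i] (H i)
  H_eq_zero_or_one : ∀ i, 1 ≤ i → ∀ ω, H i ω = 0 ∨ H i ω = 1
  measurable_p : ∀ i, 1 ≤ i → Measurable[ℱ (i - 1)] (p i)
  ae_mem_Icc : ∀ i, 1 ≤ i → ∀ᵐ ω ∂μ, c ≤ p i ω ∧ p i ω ≤ 1
  condExp_H : ∀ i, 1 ≤ i → μ[H i | ℱ (i - 1)] =ᵐ[μ] p i

namespace IsSelectionScheme

variable {Ω : Type*} {m0 : MeasurableSpace Ω} {ℱ : Filtration ℕ m0} {μ : Measure Ω} {c : ℝ}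
  {H p : ℕ → Ω → ℝ} {i : ℕ}

lemma stronglyMeasurable_pow (h : IsSelectionScheme ℱ μ c H p) (hi : 1 ≤ i) (k : ℕ) :
    StronglyMeasurable[ℱ i] fun ω ↦ (H i ω / p i ω) ^ k :=
  (((h.measurable_H i hi).div
    ((h.measurable_p i hi).mono (ℱ.mono (Nat.sub_le i 1)) le_rfl)).pow_const k).stronglyMeasurable

lemma ae_div_mem_Icc (h : IsSelectionScheme ℱ μ c H p) (hi : 1 ≤ i) :
    ∀ᵐ ω ∂μ, 0 ≤ H i ω / p i ω ∧ H i ω / p i ω ≤ c⁻¹ := by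
  filter_upwards [h.ae_mem_Icc i hi] with ω hp
  rcases h.H_eq_zero_or_one i hi ω with hH | hH
  · simp [hH, h.pos.le]
  · simpa [hH, (h.pos.trans_le hp.1).le] using inv_anti₀ h.pos hp.1

lemma ae_nonneg_pow (h : IsSelectionScheme ℱ μ c H p) (hi : 1 ≤ i) (k : ℕ) :
    0 ≤ᵐ[μ] fun ω ↦ (H i ω / p i ω) ^ k := by
  filter_upwards [h.ae_div_mem_Icc hi] with ω hω using pow_nonneg hω.1 k

lemma memLp_top_pow [IsFiniteMeasure μ] (h : IsSelectionScheme ℱ μ c H p) (hi : 1 ≤ i) (k : ℕ) :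
    MemLp (fun ω ↦ (H i ω / p i ω) ^ k) ∞ μ := by
  refine memLp_top_of_bound ((h.stronglyMeasurable_pow hi k).mono (ℱ.le i)).aestronglyMeasurable
    (c⁻¹ ^ k) ?_
  filter_upwards [h.ae_div_mem_Icc hi] with ω hω
  rw [norm_pow, Real.norm_of_nonneg hω.1]
  exact pow_le_pow_left₀ hω.1 hω.2 k

lemma condExp_pow [IsFiniteMeasure μ] (h : IsSelectionScheme ℱ μ c H p) (hi : 1 ≤ i) {k : ℕ}
    (hk : 1 ≤ k) :
    μ[fun ω ↦ (H i ω / p i ω) ^ k | ℱ (i - 1)] =ᵐ[μ] fun ω ↦ (p i ω ^ (k - 1))⁻¹ := by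
  obtain ⟨j, rfl⟩ : ∃ j, k = j + 1 := ⟨k - 1, by omega⟩
  have hpow : (fun ω ↦ (H i ω / p i ω) ^ (j + 1)) = (fun ω ↦ (p i ω ^ (j + 1))⁻¹) * H i := by
    funext ω
    rcases h.H_eq_zero_or_one i hi ω with hH | hH <;> simp [hH]
  have hH_int : Integrable (H i) μ := by
    refine .of_bound ((h.measurable_H i hi).mono (ℱ.le i) le_rfl).aestronglyMeasurable 1 ?_
    filter_upwards with ω
    rcases h.H_eq_zero_or_one i hi ω with hH | hH <;> simp [hH]
  have hinv_bound : ∀ᵐ ω ∂μ, ‖(p i ω ^ (j + 1))⁻¹‖ ≤ c⁻¹ ^ (j + 1) := by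
    filter_upwards [h.ae_mem_Icc i hi] with ω hp
    rw [norm_inv, norm_pow, Real.norm_of_nonneg (h.pos.trans_le hp.1).le, ← inv_pow]
    exact pow_le_pow_left₀ (inv_nonneg.2 (h.pos.trans_le hp.1).le) (inv_anti₀ h.pos hp.1) _
  rw [hpow]
  refine (condExp_stronglyMeasurable_mul_of_bound (ℱ.le _)
    ((h.measurable_p i hi).pow_const _).inv.stronglyMeasurable hH_int _ hinv_bound).trans ?_
  filter_upwards [h.condExp_H i hi, h.ae_mem_Icc i hi] with ω hcond hp
  have hp0 : p i ω ≠ 0 := (h.pos.trans_le hp.1).ne'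
  simp only [Pi.mul_apply, Pi.inv_apply, hcond, add_tsub_cancel_right]
  rw [pow_succ, mul_inv, inv_mul_cancel_right₀ hp0]

lemma memLp_top_prod_div [IsFiniteMeasure μ] (h : IsSelectionScheme ℱ μ c H p) {K : Finset ℕ}
    (hK : ∀ i ∈ K, 1 ≤ i) : MemLp (fun ω ↦ ∏ i ∈ K, H i ω / p i ω) ∞ μ :=
  memLp_top_prod fun i hi ↦ by simpa using h.memLp_top_pow (hK i hi) 1

variable [IsProbabilityMeasure μ]

lemma integral_prod_div_eq_one (h : IsSelectionScheme ℱ μ c H p) (K : Finset ℕ)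
    (hK : ∀ i ∈ K, 1 ≤ i) : ∫ ω, ∏ i ∈ K, H i ω / p i ω ∂μ = 1 := by
  simpa using integral_prod_eq_one_of_condExp_eq_one ℱ (g := fun i ω ↦ (H i ω / p i ω) ^ 1) K
    (fun i hi ↦ h.stronglyMeasurable_pow (hK i hi) 1) (fun i hi ↦ h.memLp_top_pow (hK i hi) 1)
    (fun i hi ↦ (h.condExp_pow (hK i hi) le_rfl).trans (.of_eq (funext fun _ ↦ by simp)))

lemma one_le_integral_prod_pow (h : IsSelectionScheme ℱ μ c H p) (K : Finset ℕ)
    (hK : ∀ i ∈ K, 1 ≤ i) (k : ℕ → ℕ) (hk : ∀ i ∈ K, 1 ≤ k i) :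
    1 ≤ ∫ ω, ∏ i ∈ K, (H i ω / p i ω) ^ k i ∂μ := by
  refine one_le_integral_prod_of_one_le_condExp ℱ K
    (fun i hi ↦ h.stronglyMeasurable_pow (hK i hi) (k i))
    (fun i hi ↦ h.memLp_top_pow (hK i hi) (k i)) (fun i hi ↦ h.ae_nonneg_pow (hK i hi) (k i))
    fun i hi ↦ ?_
  filter_upwards [h.condExp_pow (hK i hi) (hk i hi), h.ae_mem_Icc i (hK i hi)] with ω hω hp
  rw [hω]
  have hp0 : 0 < p i ω := h.pos.trans_le hp.1
  exact (one_le_inv₀ (pow_pos hp0 _)).2 (pow_le_one₀ hp0.le hp.2)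

end IsSelectionScheme

theorem stmt9_general {Ω : Type*} {m0 : MeasurableSpace Ω} {μ : Measure Ω}
    [IsProbabilityMeasure μ] (ℱ : Filtration ℕ m0)
    (c : ℝ) (hc0 : 0 < c)
    (H p : ℕ → Ω → ℝ)
    (hHmeas : ∀ i, 1 ≤ i → Measurable[ℱ i] (H i))
    (hH01 : ∀ i, 1 ≤ i → ∀ ω, H i ω = 0 ∨ H i ω = 1)
    (hpmeas : ∀ i, 1 ≤ i → Measurable[ℱ (i - 1)] (p i))
    (hpb : ∀ i, 1 ≤ i → ∀ᵐ ω ∂μ, c ≤ p i ω ∧ p i ω ≤ 1)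
    (hcond : ∀ i, 1 ≤ i → μ[H i | ℱ (i - 1)] =ᵐ[μ] p i)
    (J J' : Finset ℕ) (hJ1 : ∀ i ∈ J, 1 ≤ i) (hJ'1 : ∀ i ∈ J', 1 ≤ i) :
    0 ≤ ∫ ω, ((∏ i ∈ J, H i ω / p i ω) - ∫ ω', ∏ i ∈ J, H i ω' / p i ω' ∂μ)
        * ((∏ i ∈ J', H i ω / p i ω) - ∫ ω', ∏ i ∈ J', H i ω' / p i ω' ∂μ) ∂μ := by
  have h : IsSelectionScheme ℱ μ c H p := ⟨hc0, hHmeas, hH01, hpmeas, hpb, hcond⟩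
  have hJJ' : ∀ i ∈ J ∪ J', 1 ≤ i := by
    simpa only [mem_union, or_imp, forall_and] using And.intro hJ1 hJ'1
  change 0 ≤ ProbabilityTheory.covariance (fun ω ↦ ∏ i ∈ J, H i ω / p i ω)
    (fun ω ↦ ∏ i ∈ J', H i ω / p i ω) μ
  rw [ProbabilityTheory.covariance_eq_sub ((h.memLp_top_prod_div hJ1).mono_exponent le_top)
    ((h.memLp_top_prod_div hJ'1).mono_exponent le_top), h.integral_prod_div_eq_one J hJ1,
    h.integral_prod_div_eq_one J' hJ'1]
  simp only [Pi.mul_apply, prod_mul_prod_eq_prod_union_pow]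
  have hcross := h.one_le_integral_prod_pow (J ∪ J') hJJ' (fun i ↦ if i ∈ J ∩ J' then 2 else 1)
    fun i _ ↦ by split_ifs <;> norm_num
  linarith

theorem stmt9 {Ω : Type*} {m0 : MeasurableSpace Ω} {μ : Measure Ω}
    [IsProbabilityMeasure μ] (ℱ : Filtration ℕ m0)
    (c : ℝ) (hc0 : 0 < c) (hc1 : c ≤ 1)
    (H p : ℕ → Ω → ℝ)
    (hHmeas : ∀ i, 1 ≤ i → Measurable[ℱ i] (H i))
    (hH01 : ∀ i, 1 ≤ i → ∀ ω, H i ω = 0 ∨ H i ω = 1)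
    (hpmeas : ∀ i, 1 ≤ i → Measurable[ℱ (i - 1)] (p i))
    (hpb : ∀ i, 1 ≤ i → ∀ᵐ ω ∂μ, c ≤ p i ω ∧ p i ω ≤ 1)
    (hcond : ∀ i, 1 ≤ i → μ[H i | ℱ (i - 1)] =ᵐ[μ] p i)
    (J J' : Finset ℕ) (hJ1 : ∀ i ∈ J, 1 ≤ i) (hJ'1 : ∀ i ∈ J', 1 ≤ i) :
    0 ≤ ∫ ω, ((∏ i ∈ J, H i ω / p i ω) - ∫ ω', ∏ i ∈ J, H i ω' / p i ω' ∂μ)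
        * ((∏ i ∈ J', H i ω / p i ω) - ∫ ω', ∏ i ∈ J', H i ω' / p i ω' ∂μ) ∂μ :=
  stmt9_general ℱ c hc0 H p hHmeas hH01 hpmeas hpb hcond J J' hJ1 hJ'1
end

section
/- Let Q be a finite collection of finite sets of indices and f : Q → ℝ a weight function. Then the subgraph-sum estimator f̂(Q) = ∑_{J∈Q} f(J) · Ŝ(J) is unbiased for f(Q) = ∑_{J∈Q} f(J); that is, E[ ∑_{J∈Q} f(J) · Ŝ(J) ] = ∑_{J∈Q} f(J). -/
/-!
Each factor `H i / p i` has conditional expectation `1` given `ℱ (i - 1)`. If `a` is the largest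
index of `J`, the product over the other indices is `ℱ (a - 1)`-measurable, so pulling it out of
`μ[· | ℱ (a - 1)]` removes the factor of index `a` without changing the integral; by induction
`∫ ∏ i ∈ J, H i / p i = 1`, and the theorem follows by linearity. The bound `H i / p i ≤ c⁻¹`
makes all products integrable.
-/

open MeasureTheory Finset

section

variable {Ω : Type*} {m m0 : MeasurableSpace Ω} {μ : Measure Ω}

lemma abs_div_le_inv_of_abs_le_one {h p c : ℝ} (hh : |h| ≤ 1) (hc : 0 < c) (hcp : c ≤ p) :
    |h / p| ≤ c⁻¹ := by
  rw [abs_div, abs_of_pos (hc.trans_le hcp), div_le_iff₀ (hc.trans_le hcp)]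
  calc |h| ≤ 1 := hh
    _ = c⁻¹ * c := (inv_mul_cancel₀ hc.ne').symm
    _ ≤ c⁻¹ * p := by gcongr

lemma memLp_top_div_of_abs_le_one {H p : Ω → ℝ} {c : ℝ} (hH : AEMeasurable H μ)
    (hp : AEMeasurable p μ) (hH1 : ∀ ω, |H ω| ≤ 1) (hc : 0 < c)
    (hcp : ∀ᵐ ω ∂μ, c ≤ p ω) : MemLp (fun ω => H ω / p ω) ⊤ μ :=
  memLp_top_of_bound (hH.div hp).aestronglyMeasurable c⁻¹ <| by
    filter_upwards [hcp] with ω hω using abs_div_le_inv_of_abs_le_one (hH1 ω) hc hω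

lemma condExp_div_eq_one {H p : Ω → ℝ} (hp : Measurable[m] p)
    (hp0 : ∀ᵐ ω ∂μ, p ω ≠ 0) (hH : Integrable H μ) (hHp : Integrable (fun ω => H ω / p ω) μ)
    (hcond : μ[H | m] =ᵐ[μ] p) : μ[fun ω => H ω / p ω | m] =ᵐ[μ] 1 := by
  have hdiv : (fun ω => H ω / p ω) = H * p⁻¹ := by ext ω; simp [div_eq_mul_inv]
  rw [hdiv] at hHp ⊢
  filter_upwards [condExp_mul_of_stronglyMeasurable_right hp.inv.stronglyMeasurable hHp hH,
    hcond, hp0] with ω hpull hω hω0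
  simp [hpull, hω, hω0]

lemma memLp_top_finset_prod {ι : Type*} {s : Finset ι} {X : ι → Ω → ℝ}
    (hX : ∀ i ∈ s, MemLp (X i) ⊤ μ) : MemLp (fun ω => ∏ i ∈ s, X i ω) ⊤ μ := by
  simpa using MemLp.prod' hX

end

section

variable {Ω : Type*} {m0 : MeasurableSpace Ω} {μ : Measure Ω} [IsProbabilityMeasure μ]
  {ℱ : Filtration ℕ m0} {X : ℕ → Ω → ℝ}

theorem integral_finset_prod_eq_one_of_condExp_eq_one (J : Finset ℕ)
    (hX : ∀ i ∈ J, StronglyMeasurable[ℱ i] (X i)) (hXbdd : ∀ i ∈ J, MemLp (X i) ⊤ μ)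
    (hcond : ∀ i ∈ J, μ[X i | ℱ (i - 1)] =ᵐ[μ] 1) :
    ∫ ω, ∏ i ∈ J, X i ω ∂μ = 1 := by
  classical
  induction J using Finset.induction_on_max with
  | empty => simp
  | insert a s hlt ih =>
    have ha : a ∉ s := fun h => lt_irrefl a (hlt a h)
    set F : Ω → ℝ := fun ω => ∏ i ∈ s, X i ω
    have hF : StronglyMeasurable[ℱ (a - 1)] F :=
      Finset.stronglyMeasurable_fun_prod _ fun i hi =>
        (hX i (mem_insert_of_mem hi)).mono (ℱ.mono (Nat.le_sub_one_of_lt (hlt i hi)))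
    have hsplit : (fun ω => ∏ i ∈ insert a s, X i ω) = F * X a := by
      ext ω; simp [F, prod_insert ha, mul_comm]
    have hint : Integrable (F * X a) μ :=
      hsplit ▸ (memLp_top_finset_prod hXbdd).integrable le_top
    calc ∫ ω, ∏ i ∈ insert a s, X i ω ∂μ = ∫ ω, μ[F * X a | ℱ (a - 1)] ω ∂μ := by
          rw [integral_condExp (ℱ.le _), hsplit]
      _ = ∫ ω, F ω ∂μ := by
          refine integral_congr_ae ?_
          filter_upwards [condExp_mul_of_stronglyMeasurable_left hF hint
            ((hXbdd a (mem_insert_self a s)).integrable le_top), hcond a (mem_insert_self a s)]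
            with ω hpull hω
          simp [hpull, hω]
      _ = 1 := ih (fun i hi => hX i (mem_insert_of_mem hi))
          (fun i hi => hXbdd i (mem_insert_of_mem hi)) (fun i hi => hcond i (mem_insert_of_mem hi))

end

theorem stmt11_general {Ω : Type*} {m0 : MeasurableSpace Ω} {μ : Measure Ω}
    [IsProbabilityMeasure μ] (ℱ : Filtration ℕ m0)
    (c : ℝ) (hc0 : 0 < c)
    (H p : ℕ → Ω → ℝ)
    (hHmeas : ∀ i, 1 ≤ i → Measurable[ℱ i] (H i))
    (hH01 : ∀ i, 1 ≤ i → ∀ ω, H i ω = 0 ∨ H i ω = 1)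
    (hpmeas : ∀ i, 1 ≤ i → Measurable[ℱ (i - 1)] (p i))
    (hpb : ∀ i, 1 ≤ i → ∀ᵐ ω ∂μ, c ≤ p i ω ∧ p i ω ≤ 1)
    (hcond : ∀ i, 1 ≤ i → μ[H i | ℱ (i - 1)] =ᵐ[μ] p i)
    (Q : Finset (Finset ℕ)) (hQ1 : ∀ J ∈ Q, ∀ i ∈ J, 1 ≤ i)
    (f : Finset ℕ → ℝ) :
    ∫ ω, ∑ J ∈ Q, f J * ∏ i ∈ J, H i ω / p i ω ∂μ = ∑ J ∈ Q, f J := by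
  have hH1 : ∀ i, 1 ≤ i → ∀ ω, |H i ω| ≤ 1 := fun i hi ω => by
    rcases hH01 i hi ω with h | h <;> simp [h]
  have hHae : ∀ i, 1 ≤ i → AEMeasurable (H i) μ := fun i hi =>
    ((hHmeas i hi).mono (ℱ.le i) le_rfl).aemeasurable
  have hmeas : ∀ i, 1 ≤ i → Measurable[ℱ i] (fun ω => H i ω / p i ω) := fun i hi =>
    (hHmeas i hi).div ((hpmeas i hi).mono (ℱ.mono (Nat.sub_le i 1)) le_rfl)
  have hbdd : ∀ i, 1 ≤ i → MemLp (fun ω => H i ω / p i ω) ⊤ μ := fun i hi =>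
    memLp_top_div_of_abs_le_one (hHae i hi) ((hpmeas i hi).mono (ℱ.le _) le_rfl).aemeasurable
      (hH1 i hi) hc0 (by filter_upwards [hpb i hi] with ω hω using hω.1)
  have hunit : ∀ i, 1 ≤ i → μ[fun ω => H i ω / p i ω | ℱ (i - 1)] =ᵐ[μ] 1 := fun i hi =>
    condExp_div_eq_one (hpmeas i hi)
      (by filter_upwards [hpb i hi] with ω hω using (hc0.trans_le hω.1).ne')
      ((memLp_top_of_bound (hHae i hi).aestronglyMeasurable 1
        (Filter.Eventually.of_forall (hH1 i hi))).integrable le_top)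
      ((hbdd i hi).integrable le_top) (hcond i hi)
  have hint : ∀ J ∈ Q, Integrable (fun ω => f J * ∏ i ∈ J, H i ω / p i ω) μ := fun J hJ =>
    ((memLp_top_finset_prod fun i hi => hbdd i (hQ1 J hJ i hi)).integrable le_top).const_mul (f J)
  rw [integral_finsetSum Q hint]
  refine sum_congr rfl fun J hJ => ?_
  rw [integral_const_mul, integral_finset_prod_eq_one_of_condExp_eq_one J
    (fun i hi => (hmeas i (hQ1 J hJ i hi)).stronglyMeasurable)
    (fun i hi => hbdd i (hQ1 J hJ i hi)) (fun i hi => hunit i (hQ1 J hJ i hi)), mul_one]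

theorem stmt11 {Ω : Type*} {m0 : MeasurableSpace Ω} {μ : Measure Ω}
    [IsProbabilityMeasure μ] (ℱ : Filtration ℕ m0)
    (c : ℝ) (hc0 : 0 < c) (hc1 : c ≤ 1)
    (H p : ℕ → Ω → ℝ)
    (hHmeas : ∀ i, 1 ≤ i → Measurable[ℱ i] (H i))
    (hH01 : ∀ i, 1 ≤ i → ∀ ω, H i ω = 0 ∨ H i ω = 1)
    (hpmeas : ∀ i, 1 ≤ i → Measurable[ℱ (i - 1)] (p i))
    (hpb : ∀ i, 1 ≤ i → ∀ᵐ ω ∂μ, c ≤ p i ω ∧ p i ω ≤ 1)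
    (hcond : ∀ i, 1 ≤ i → μ[H i | ℱ (i - 1)] =ᵐ[μ] p i)
    (Q : Finset (Finset ℕ)) (hQ1 : ∀ J ∈ Q, ∀ i ∈ J, 1 ≤ i)
    (f : Finset ℕ → ℝ) :
    ∫ ω, ∑ J ∈ Q, f J * ∏ i ∈ J, H i ω / p i ω ∂μ = ∑ J ∈ Q, f J :=
  stmt11_general ℱ c hc0 H p hHmeas hH01 hpmeas hpb hcond Q hQ1 f
end

section
/- Let Q be a finite collection of finite sets of indices and f : Q → ℝ a weight function, and let f̂(Q) = ∑_{J∈Q} f(J) · Ŝ(J). Then the random variable ∑_{J, J' ∈ Q, J ∩ J' ≠ ∅} f(J) f(J') · Ŝ(J ∪ J') · (Ŝ(J ∩ J') − 1) is an unbiased estimator of Var(f̂(Q)); that is, its expectation equals Var(∑_{J∈Q} f(J) · Ŝ(J)). -/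
/-!
Write `Ŝ(K) = ∏_{i ∈ K} H_i / p_i`. Conditioning on `ℱ_{max K - 1}` removes the last factor of
`Ŝ(K)` in expectation, since `𝔼[H_i | ℱ_{i-1}] = p_i`, so by induction `𝔼[Ŝ(K)] = 1` for every `K`.
As `Ŝ(J) Ŝ(J') = Ŝ(J ∪ J') Ŝ(J ∩ J')`, the term `Ŝ(J ∪ J') (Ŝ(J ∩ J') - 1)` has expectation
`𝔼[Ŝ(J) Ŝ(J')] - 1 = Cov(Ŝ(J), Ŝ(J'))`, and it vanishes when `J ∩ J' = ∅`. Summing over pairs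
gives the variance of `∑_J f(J) Ŝ(J)`.
-/

open MeasureTheory Finset ProbabilityTheory

theorem integral_mul_eq_of_condExp_ae_eq {Ω : Type*} {m m0 : MeasurableSpace Ω} {μ : Measure Ω}
    [IsFiniteMeasure μ] (hm : m ≤ m0) {f g h : Ω → ℝ} (hf : StronglyMeasurable[m] f)
    (hfg : Integrable (f * g) μ) (hg : Integrable g μ) (hgh : μ[g | m] =ᵐ[μ] h) :
    ∫ ω, f ω * g ω ∂μ = ∫ ω, f ω * h ω ∂μ := by
  calc ∫ ω, f ω * g ω ∂μ = ∫ ω, μ[f * g | m] ω ∂μ := (integral_condExp hm).symm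
    _ = ∫ ω, f ω * h ω ∂μ := by
      refine integral_congr_ae ?_
      filter_upwards [condExp_mul_of_stronglyMeasurable_left hf hfg hg, hgh] with ω h₁ h₂
      rw [h₁, Pi.mul_apply, h₂]

section SelectionEstimator

variable {Ω : Type*} {m0 : MeasurableSpace Ω} {μ : Measure Ω} {ℱ : Filtration ℕ m0}
  {H p : ℕ → Ω → ℝ} {c : ℝ}

noncomputable def selectionEstimator (H p : ℕ → Ω → ℝ) (K : Finset ℕ) (ω : Ω) : ℝ :=
  ∏ i ∈ K, H i ω / p i ω

local notation "Ŝ" => selectionEstimator H p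

@[simp]
lemma selectionEstimator_empty (ω : Ω) : Ŝ ∅ ω = 1 := prod_empty

lemma selectionEstimator_union_mul_inter (J J' : Finset ℕ) (ω : Ω) :
    Ŝ (J ∪ J') ω * Ŝ (J ∩ J') ω = Ŝ J ω * Ŝ J' ω :=
  prod_union_inter

lemma selectionEstimator_union_mul_inter_sub_one (J J' : Finset ℕ) (ω : Ω) :
    Ŝ (J ∪ J') ω * (Ŝ (J ∩ J') ω - 1) = Ŝ J ω * Ŝ J' ω - Ŝ (J ∪ J') ω := by
  rw [mul_sub, mul_one, selectionEstimator_union_mul_inter]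

lemma ite_inter_nonempty_selectionEstimator (J J' : Finset ℕ) (x : ℝ) (ω : Ω) :
    (if (J ∩ J').Nonempty then x * (Ŝ (J ∪ J') ω * (Ŝ (J ∩ J') ω - 1)) else 0)
      = x * (Ŝ (J ∪ J') ω * (Ŝ (J ∩ J') ω - 1)) := by
  split_ifs with h
  · rfl
  · rw [not_nonempty_iff_eq_empty.1 h, selectionEstimator_empty, sub_self, mul_zero, mul_zero]

lemma measurable_selectionEstimator_filtration
    (hHmeas : ∀ i, 1 ≤ i → Measurable[ℱ i] (H i))
    (hpmeas : ∀ i, 1 ≤ i → Measurable[ℱ (i - 1)] (p i))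
    {K : Finset ℕ} (hK : ∀ i ∈ K, 1 ≤ i) {n : ℕ} (hKn : ∀ i ∈ K, i ≤ n) :
    Measurable[ℱ n] (Ŝ K) :=
  measurable_prod _ fun i hi ↦
    ((hHmeas i (hK i hi)).mono (ℱ.mono (hKn i hi)) le_rfl).div
      ((hpmeas i (hK i hi)).mono (ℱ.mono (tsub_le_self.trans (hKn i hi))) le_rfl)

lemma measurable_selectionEstimator
    (hHmeas : ∀ i, 1 ≤ i → Measurable[ℱ i] (H i))
    (hpmeas : ∀ i, 1 ≤ i → Measurable[ℱ (i - 1)] (p i))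
    {K : Finset ℕ} (hK : ∀ i ∈ K, 1 ≤ i) : Measurable (Ŝ K) :=
  (measurable_selectionEstimator_filtration hHmeas hpmeas hK fun _ ↦ le_sup (f := id)).mono
    (ℱ.le _) le_rfl

lemma ae_abs_selectionEstimator_le (hc : 0 < c) {K : Finset ℕ} (hH : ∀ i ∈ K, ∀ ω, |H i ω| ≤ 1)
    (hp : ∀ i ∈ K, ∀ᵐ ω ∂μ, c ≤ p i ω) : ∀ᵐ ω ∂μ, |Ŝ K ω| ≤ c⁻¹ ^ #K := by
  filter_upwards [(Filter.eventually_all_finset K).2 hp] with ω hω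
  rw [selectionEstimator, abs_prod, ← prod_const]
  refine prod_le_prod (fun _ _ ↦ abs_nonneg _) fun i hi ↦ ?_
  rw [abs_div, abs_of_pos (hc.trans_le (hω i hi)), div_eq_mul_inv]
  simpa using mul_le_mul (hH i hi ω) (inv_anti₀ hc (hω i hi))
    (inv_pos.2 (hc.trans_le (hω i hi))).le zero_le_one

lemma memLp_selectionEstimator [IsFiniteMeasure μ] (hc : 0 < c)
    (hHmeas : ∀ i, 1 ≤ i → Measurable[ℱ i] (H i)) (hH : ∀ i, 1 ≤ i → ∀ ω, |H i ω| ≤ 1)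
    (hpmeas : ∀ i, 1 ≤ i → Measurable[ℱ (i - 1)] (p i)) (hp : ∀ i, 1 ≤ i → ∀ᵐ ω ∂μ, c ≤ p i ω)
    {K : Finset ℕ} (hK : ∀ i ∈ K, 1 ≤ i) (q : ENNReal) : MemLp (Ŝ K) q μ :=
  .of_bound (measurable_selectionEstimator hHmeas hpmeas hK).aestronglyMeasurable _
    (ae_abs_selectionEstimator_le hc (fun i hi ↦ hH i (hK i hi)) fun i hi ↦ hp i (hK i hi))

lemma integral_selectionEstimator [IsProbabilityMeasure μ] (hc : 0 < c)
    (hHmeas : ∀ i, 1 ≤ i → Measurable[ℱ i] (H i)) (hH : ∀ i, 1 ≤ i → ∀ ω, |H i ω| ≤ 1)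
    (hpmeas : ∀ i, 1 ≤ i → Measurable[ℱ (i - 1)] (p i)) (hp : ∀ i, 1 ≤ i → ∀ᵐ ω ∂μ, c ≤ p i ω)
    (hcond : ∀ i, 1 ≤ i → μ[H i | ℱ (i - 1)] =ᵐ[μ] p i)
    {K : Finset ℕ} (hK : ∀ i ∈ K, 1 ≤ i) : ∫ ω, Ŝ K ω ∂μ = 1 := by
  induction K using induction_on_max with
  | empty => simp
  | insert a K hKa ih =>
    have ha : 1 ≤ a := hK a (mem_insert_self a K)
    have hK' : ∀ i ∈ K, 1 ≤ i := fun i hi ↦ hK i (mem_insert_of_mem hi)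
    have hg : StronglyMeasurable[ℱ (a - 1)] fun ω ↦ Ŝ K ω / p a ω :=
      ((measurable_selectionEstimator_filtration hHmeas hpmeas hK'
        fun i hi ↦ Nat.le_sub_one_of_lt (hKa i hi)).div (hpmeas a ha)).stronglyMeasurable
    have hsplit : Ŝ (insert a K) = (fun ω ↦ Ŝ K ω / p a ω) * H a := by
      ext ω
      simp only [selectionEstimator, prod_insert fun h ↦ (hKa a h).false, Pi.mul_apply]
      ring
    have hHa : Integrable (H a) μ :=
      .of_bound ((hHmeas a ha).mono (ℱ.le a) le_rfl).aestronglyMeasurable 1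
        (.of_forall (hH a ha))
    have hint := (memLp_selectionEstimator hc hHmeas hH hpmeas hp hK 1).integrable le_rfl
    rw [hsplit] at hint
    calc ∫ ω, Ŝ (insert a K) ω ∂μ = ∫ ω, Ŝ K ω / p a ω * H a ω ∂μ := by rw [hsplit]; rfl
      _ = ∫ ω, Ŝ K ω / p a ω * p a ω ∂μ :=
        integral_mul_eq_of_condExp_ae_eq (ℱ.le _) hg hint hHa (hcond a ha)
      _ = ∫ ω, Ŝ K ω ∂μ := by
        refine integral_congr_ae ?_
        filter_upwards [hp a ha] with ω hω
        exact div_mul_cancel₀ _ (hc.trans_le hω).ne'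
      _ = 1 := ih hK'

lemma integrable_selectionEstimator_union_mul_inter_sub_one [IsFiniteMeasure μ] (hc : 0 < c)
    (hHmeas : ∀ i, 1 ≤ i → Measurable[ℱ i] (H i)) (hH : ∀ i, 1 ≤ i → ∀ ω, |H i ω| ≤ 1)
    (hpmeas : ∀ i, 1 ≤ i → Measurable[ℱ (i - 1)] (p i)) (hp : ∀ i, 1 ≤ i → ∀ᵐ ω ∂μ, c ≤ p i ω)
    {J J' : Finset ℕ} (hJ : ∀ i ∈ J, 1 ≤ i) (hJ' : ∀ i ∈ J', 1 ≤ i) :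
    Integrable (fun ω ↦ Ŝ (J ∪ J') ω * (Ŝ (J ∩ J') ω - 1)) μ := by
  have hinter : ∀ i ∈ J ∩ J', 1 ≤ i := fun i hi ↦ hJ i (mem_inter.1 hi).1
  have hmemLp {K : Finset ℕ} (hK : ∀ i ∈ K, 1 ≤ i) :=
    memLp_selectionEstimator hc hHmeas hH hpmeas hp hK 2
  exact (hmemLp (forall_mem_union.2 ⟨hJ, hJ'⟩)).integrable_mul ((hmemLp hinter).sub (memLp_const 1))

lemma integral_selectionEstimator_union_mul_inter_sub_one [IsProbabilityMeasure μ] (hc : 0 < c)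
    (hHmeas : ∀ i, 1 ≤ i → Measurable[ℱ i] (H i)) (hH : ∀ i, 1 ≤ i → ∀ ω, |H i ω| ≤ 1)
    (hpmeas : ∀ i, 1 ≤ i → Measurable[ℱ (i - 1)] (p i)) (hp : ∀ i, 1 ≤ i → ∀ᵐ ω ∂μ, c ≤ p i ω)
    (hcond : ∀ i, 1 ≤ i → μ[H i | ℱ (i - 1)] =ᵐ[μ] p i)
    {J J' : Finset ℕ} (hJ : ∀ i ∈ J, 1 ≤ i) (hJ' : ∀ i ∈ J', 1 ≤ i) :
    ∫ ω, Ŝ (J ∪ J') ω * (Ŝ (J ∩ J') ω - 1) ∂μ = cov[Ŝ J, Ŝ J'; μ] := by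
  have hunion : ∀ i ∈ J ∪ J', 1 ≤ i := forall_mem_union.2 ⟨hJ, hJ'⟩
  have hmemLp {K : Finset ℕ} (hK : ∀ i ∈ K, 1 ≤ i) :=
    memLp_selectionEstimator hc hHmeas hH hpmeas hp hK 2
  have hprod : Integrable (fun ω ↦ Ŝ J ω * Ŝ J' ω) μ := (hmemLp hJ).integrable_mul (hmemLp hJ')
  simp_rw [selectionEstimator_union_mul_inter_sub_one]
  rw [integral_sub hprod ((hmemLp hunion).integrable one_le_two),
    covariance_eq_sub (hmemLp hJ) (hmemLp hJ'),
    integral_selectionEstimator hc hHmeas hH hpmeas hp hcond hunion,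
    integral_selectionEstimator hc hHmeas hH hpmeas hp hcond hJ,
    integral_selectionEstimator hc hHmeas hH hpmeas hp hcond hJ', mul_one]
  rfl

end SelectionEstimator

theorem stmt12_general {Ω : Type*} {m0 : MeasurableSpace Ω} {μ : Measure Ω}
    [IsProbabilityMeasure μ] (ℱ : Filtration ℕ m0)
    (c : ℝ) (hc0 : 0 < c)
    (H p : ℕ → Ω → ℝ)
    (hHmeas : ∀ i, 1 ≤ i → Measurable[ℱ i] (H i))
    (hH01 : ∀ i, 1 ≤ i → ∀ ω, H i ω = 0 ∨ H i ω = 1)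
    (hpmeas : ∀ i, 1 ≤ i → Measurable[ℱ (i - 1)] (p i))
    (hpb : ∀ i, 1 ≤ i → ∀ᵐ ω ∂μ, c ≤ p i ω ∧ p i ω ≤ 1)
    (hcond : ∀ i, 1 ≤ i → μ[H i | ℱ (i - 1)] =ᵐ[μ] p i)
    (Q : Finset (Finset ℕ)) (hQ1 : ∀ J ∈ Q, ∀ i ∈ J, 1 ≤ i)
    (f : Finset ℕ → ℝ) :
    ∫ ω, ∑ J ∈ Q, ∑ J' ∈ Q,
        (if (J ∩ J').Nonempty then
          f J * f J' * ((∏ i ∈ J ∪ J', H i ω / p i ω)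
            * ((∏ i ∈ J ∩ J', H i ω / p i ω) - 1))
        else 0) ∂μ
      = ∫ ω, ((∑ J ∈ Q, f J * ∏ i ∈ J, H i ω / p i ω)
          - ∫ ω', ∑ J ∈ Q, f J * ∏ i ∈ J, H i ω' / p i ω' ∂μ) ^ 2 ∂μ := by
  set S := selectionEstimator H p
  have hH : ∀ i, 1 ≤ i → ∀ ω, |H i ω| ≤ 1 := fun i hi ω ↦ by
    rcases hH01 i hi ω with h | h <;> simp [h]
  have hp : ∀ i, 1 ≤ i → ∀ᵐ ω ∂μ, c ≤ p i ω := fun i hi ↦ (hpb i hi).mono fun _ h ↦ h.1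
  have hmemLp {K : Finset ℕ} (hK : ∀ i ∈ K, 1 ≤ i) (q : ENNReal) :=
    memLp_selectionEstimator hc0 hHmeas hH hpmeas hp hK q
  calc _ = ∫ ω, ∑ J ∈ Q, ∑ J' ∈ Q, f J * f J' * (S (J ∪ J') ω * (S (J ∩ J') ω - 1)) ∂μ := by
        congr 1 with ω
        exact sum_congr rfl fun J _ ↦ sum_congr rfl fun J' _ ↦
          ite_inter_nonempty_selectionEstimator J J' _ ω
    _ = ∑ J ∈ Q, ∑ J' ∈ Q, cov[fun ω ↦ f J * S J ω, fun ω ↦ f J' * S J' ω; μ] := by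
        have hint {J} (hJ : J ∈ Q) {J'} (hJ' : J' ∈ Q) :=
          (integrable_selectionEstimator_union_mul_inter_sub_one hc0 hHmeas hH hpmeas hp
            (hQ1 J hJ) (hQ1 J' hJ')).const_mul (f J * f J')
        rw [integral_finsetSum _ fun J hJ ↦ integrable_finsetSum _ fun J' hJ' ↦ hint hJ hJ']
        refine sum_congr rfl fun J hJ ↦ (integral_finsetSum _ fun J' hJ' ↦ hint hJ hJ').trans <|
          sum_congr rfl fun J' hJ' ↦ ?_
        rw [integral_const_mul, integral_selectionEstimator_union_mul_inter_sub_one hc0 hHmeas hH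
          hpmeas hp hcond (hQ1 J hJ) (hQ1 J' hJ'), covariance_const_mul_left,
          covariance_const_mul_right, mul_assoc]
    _ = Var[fun ω ↦ ∑ J ∈ Q, f J * S J ω; μ] :=
        (variance_fun_sum' fun J hJ ↦ (hmemLp (hQ1 J hJ) 2).const_mul (f J)).symm
    _ = _ := variance_eq_integral <| Finset.aemeasurable_fun_sum _ fun J hJ ↦
        ((hmemLp (hQ1 J hJ) 1).aestronglyMeasurable.aemeasurable.const_mul (f J))

theorem stmt12 {Ω : Type*} {m0 : MeasurableSpace Ω} {μ : Measure Ω}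
    [IsProbabilityMeasure μ] (ℱ : Filtration ℕ m0)
    (c : ℝ) (hc0 : 0 < c) (hc1 : c ≤ 1)
    (H p : ℕ → Ω → ℝ)
    (hHmeas : ∀ i, 1 ≤ i → Measurable[ℱ i] (H i))
    (hH01 : ∀ i, 1 ≤ i → ∀ ω, H i ω = 0 ∨ H i ω = 1)
    (hpmeas : ∀ i, 1 ≤ i → Measurable[ℱ (i - 1)] (p i))
    (hpb : ∀ i, 1 ≤ i → ∀ᵐ ω ∂μ, c ≤ p i ω ∧ p i ω ≤ 1)
    (hcond : ∀ i, 1 ≤ i → μ[H i | ℱ (i - 1)] =ᵐ[μ] p i)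
    (Q : Finset (Finset ℕ)) (hQ1 : ∀ J ∈ Q, ∀ i ∈ J, 1 ≤ i)
    (f : Finset ℕ → ℝ) :
    ∫ ω, ∑ J ∈ Q, ∑ J' ∈ Q,
        (if (J ∩ J').Nonempty then
          f J * f J' * ((∏ i ∈ J ∪ J', H i ω / p i ω)
            * ((∏ i ∈ J ∩ J', H i ω / p i ω) - 1))
        else 0) ∂μ
      = ∫ ω, ((∑ J ∈ Q, f J * ∏ i ∈ J, H i ω / p i ω)
          - ∫ ω', ∑ J ∈ Q, f J * ∏ i ∈ J, H i ω' / p i ω' ∂μ) ^ 2 ∂μ :=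
  stmt12_general ℱ c hc0 H p hHmeas hH01 hpmeas hpb hcond Q hQ1 f
end

section
/- For any m ≥ 1, the random variable ∑_{i=1}^{m} (H_i / p_i) · (1/p_i − 1) is an unbiased estimator of the variance of the edge-count estimator N̂_K = ∑_{i=1}^{m} H_i / p_i; that is, E[ ∑_{i=1}^{m} (H_i / p_i)(1/p_i − 1) ] = Var( ∑_{i=1}^{m} H_i / p_i ). -/
open MeasureTheory Finset
open scoped ENNReal

/-!
Write `D i = H i / p i - 1`. Pulling the `ℱ (i - 1)`-measurable factor `g / p i` out of the
conditional expectation gives `E[g · H i / p i] = E[g]` for every integrable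
`ℱ (i - 1)`-measurable `g`. With `g = 1` each `D i` is centred, so `E N̂ = m`; with `g = D i` for
`i < j` the `D i` are pairwise orthogonal, so `Var N̂ = ∑ E[D i ^ 2]`. Finally `H i ^ 2 = H i`
gives the pointwise identity `(H i / p i)(1 / p i - 1) = D i ^ 2 + D i`, whose expectation is
`E[D i ^ 2]`.
-/

section PullOut

variable {Ω : Type*} {m m0 : MeasurableSpace Ω} {μ : Measure Ω} [IsFiniteMeasure μ]

theorem integral_mul_eq_integral_mul_of_condExp_eq (hm : m ≤ m0) {f g q : Ω → ℝ}
    (hg : AEStronglyMeasurable[m] g μ) (hf : Integrable f μ) (hgf : Integrable (g * f) μ)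
    (hcond : μ[f | m] =ᵐ[μ] q) :
    ∫ ω, g ω * f ω ∂μ = ∫ ω, g ω * q ω ∂μ := by
  rw [← integral_condExp hm]
  refine integral_congr_ae ?_
  filter_upwards [condExp_mul_of_aestronglyMeasurable_left hg hgf hf, hcond] with ω hpull hq
  rw [← Pi.mul_def, hpull, Pi.mul_apply, hq]

theorem integral_mul_div_eq_integral_of_condExp_eq (hm : m ≤ m0) {f g q : Ω → ℝ}
    (hg : AEStronglyMeasurable[m] g μ) (hq : AEStronglyMeasurable[m] q μ)
    (hq0 : ∀ᵐ ω ∂μ, q ω ≠ 0) (hf : Integrable f μ)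
    (hgf : Integrable (fun ω => g ω * (f ω / q ω)) μ) (hcond : μ[f | m] =ᵐ[μ] q) :
    ∫ ω, g ω * (f ω / q ω) ∂μ = ∫ ω, g ω ∂μ := by
  have hgf' : Integrable (g / q * f) μ := hgf.congr (ae_of_all _ fun ω => by
    simp only [Pi.mul_apply, Pi.div_apply]; ring)
  calc ∫ ω, g ω * (f ω / q ω) ∂μ = ∫ ω, (g / q) ω * f ω ∂μ := by
        congr 1; ext ω; simp only [Pi.div_apply]; ring
    _ = ∫ ω, (g / q) ω * q ω ∂μ :=
        integral_mul_eq_integral_mul_of_condExp_eq hm (hg.div₀ hq) hf hgf' hcond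
    _ = ∫ ω, g ω ∂μ := integral_congr_ae (hq0.mono fun ω h => div_mul_cancel₀ _ h)

end PullOut

theorem integral_sq_sum_eq_sum_integral_sq {Ω ι : Type*} {m0 : MeasurableSpace Ω}
    {μ : Measure Ω} {s : Finset ι} {D : ι → Ω → ℝ}
    (hD : ∀ i ∈ s, ∀ j ∈ s, Integrable (fun ω => D i ω * D j ω) μ)
    (horth : ∀ i ∈ s, ∀ j ∈ s, i ≠ j → ∫ ω, D i ω * D j ω ∂μ = 0) :
    ∫ ω, (∑ i ∈ s, D i ω) ^ 2 ∂μ = ∑ i ∈ s, ∫ ω, D i ω ^ 2 ∂μ := by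
  simp_rw [sq, sum_mul_sum]
  rw [integral_finsetSum _ fun i hi => integrable_finsetSum _ (hD i hi)]
  refine sum_congr rfl fun i hi => ?_
  rw [integral_finsetSum _ (hD i hi), sum_eq_single_of_mem i hi]
  exact fun j hj hji => horth i hi j hj hji.symm

theorem div_mul_one_div_sub_one_of_eq_zero_or_eq_one {h p : ℝ} (hh : h = 0 ∨ h = 1) :
    h / p * (1 / p - 1) = (h / p - 1) ^ 2 + (h / p - 1) := by
  rcases hh with rfl | rfl <;> ring

structure IsAdaptiveSelection {Ω : Type*} {m0 : MeasurableSpace Ω} (μ : Measure Ω)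
    (ℱ : Filtration ℕ m0) (c : ℝ) (H p : ℕ → Ω → ℝ) : Prop where
  c_pos : 0 < c
  measurable_H : ∀ i, 1 ≤ i → Measurable[ℱ i] (H i)
  H_eq_zero_or_one : ∀ i, 1 ≤ i → ∀ ω, H i ω = 0 ∨ H i ω = 1
  measurable_p : ∀ i, 1 ≤ i → Measurable[ℱ (i - 1)] (p i)
  le_p : ∀ i, 1 ≤ i → ∀ᵐ ω ∂μ, c ≤ p i ω
  condExp_H : ∀ i, 1 ≤ i → μ[H i | ℱ (i - 1)] =ᵐ[μ] p i

namespace IsAdaptiveSelection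

variable {Ω : Type*} {m0 : MeasurableSpace Ω} {μ : Measure Ω}
  {ℱ : Filtration ℕ m0} {c : ℝ} {H p : ℕ → Ω → ℝ} {i j : ℕ}

theorem measurable_div (hS : IsAdaptiveSelection μ ℱ c H p) (hi : 1 ≤ i) (hij : i ≤ j) :
    Measurable[ℱ j] (fun ω => H i ω / p i ω) :=
  ((hS.measurable_H i hi).mono (ℱ.mono hij) le_rfl).div
    ((hS.measurable_p i hi).mono (ℱ.mono (i.sub_le 1 |>.trans hij)) le_rfl)

theorem memLp_top_div (hS : IsAdaptiveSelection μ ℱ c H p) (hi : 1 ≤ i) :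
    MemLp (fun ω => H i ω / p i ω) ∞ μ := by
  refine memLp_top_of_bound
    ((hS.measurable_div hi le_rfl).mono (ℱ.le i) le_rfl).aestronglyMeasurable c⁻¹ ?_
  filter_upwards [hS.le_p i hi] with ω hcp
  have hc := hS.c_pos
  rcases hS.H_eq_zero_or_one i hi ω with h | h <;> rw [h]
  · simpa using hc.le
  · rw [norm_div, norm_one, Real.norm_of_nonneg (hc.trans_le hcp).le, one_div]
    exact inv_anti₀ hc hcp

theorem memLp_top_div_sub_one [IsFiniteMeasure μ] (hS : IsAdaptiveSelection μ ℱ c H p)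
    (hi : 1 ≤ i) : MemLp (fun ω => H i ω / p i ω - 1) ∞ μ :=
  (hS.memLp_top_div hi).sub (memLp_const 1)

theorem integral_mul_div [IsFiniteMeasure μ] (hS : IsAdaptiveSelection μ ℱ c H p) (hi : 1 ≤ i)
    {g : Ω → ℝ} (hg : Measurable[ℱ (i - 1)] g) (hgi : Integrable g μ) :
    ∫ ω, g ω * (H i ω / p i ω) ∂μ = ∫ ω, g ω ∂μ := by
  have hH : Integrable (H i) μ := by
    refine .of_bound ((hS.measurable_H i hi).mono (ℱ.le i) le_rfl).aestronglyMeasurable 1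
      (ae_of_all _ fun ω => ?_)
    rcases hS.H_eq_zero_or_one i hi ω with h | h <;> simp [h]
  exact integral_mul_div_eq_integral_of_condExp_eq (ℱ.le _) hg.aestronglyMeasurable
    (hS.measurable_p i hi).aestronglyMeasurable
    ((hS.le_p i hi).mono fun ω h => (hS.c_pos.trans_le h).ne') hH
    (hgi.mul_of_top_left (hS.memLp_top_div hi)) (hS.condExp_H i hi)

theorem integral_div [IsProbabilityMeasure μ] (hS : IsAdaptiveSelection μ ℱ c H p)
    (hi : 1 ≤ i) : ∫ ω, H i ω / p i ω ∂μ = 1 := by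
  simpa using hS.integral_mul_div hi measurable_const (integrable_const (1 : ℝ))

theorem integral_div_sub_one [IsProbabilityMeasure μ] (hS : IsAdaptiveSelection μ ℱ c H p)
    (hi : 1 ≤ i) : ∫ ω, (H i ω / p i ω - 1) ∂μ = 0 := by
  rw [integral_sub ((hS.memLp_top_div hi).integrable le_top) (integrable_const 1),
    hS.integral_div hi]
  simp

theorem integral_div_sub_one_mul_div_sub_one [IsProbabilityMeasure μ]
    (hS : IsAdaptiveSelection μ ℱ c H p) (hi : 1 ≤ i) (hj : 1 ≤ j) (hij : i ≠ j) :
    ∫ ω, (H i ω / p i ω - 1) * (H j ω / p j ω - 1) ∂μ = 0 := by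
  wlog hlt : i < j generalizing i j
  · simpa only [mul_comm] using this hj hi hij.symm (by omega)
  have hDi := (hS.memLp_top_div_sub_one hi).integrable le_top
  have hDiXj : Integrable (fun ω => (H i ω / p i ω - 1) * (H j ω / p j ω)) μ :=
    hDi.mul_of_top_left (hS.memLp_top_div hj)
  simp_rw [mul_sub_one]
  rw [integral_sub hDiXj hDi, sub_eq_zero]
  exact hS.integral_mul_div hj ((hS.measurable_div hi (by omega)).sub_const 1) hDi

theorem integrable_sq_div_sub_one [IsFiniteMeasure μ] (hS : IsAdaptiveSelection μ ℱ c H p)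
    (hi : 1 ≤ i) : Integrable (fun ω => (H i ω / p i ω - 1) ^ 2) μ := by
  simpa only [sq] using
    ((hS.memLp_top_div_sub_one hi).mul' (hS.memLp_top_div_sub_one hi)).integrable le_top

theorem div_mul_one_div_sub_one_eq (hS : IsAdaptiveSelection μ ℱ c H p) (hi : 1 ≤ i) :
    (fun ω => H i ω / p i ω * (1 / p i ω - 1))
      = fun ω => (H i ω / p i ω - 1) ^ 2 + (H i ω / p i ω - 1) :=
  funext fun ω => div_mul_one_div_sub_one_of_eq_zero_or_eq_one (hS.H_eq_zero_or_one i hi ω)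

theorem integral_div_mul_one_div_sub_one [IsProbabilityMeasure μ]
    (hS : IsAdaptiveSelection μ ℱ c H p) (hi : 1 ≤ i) :
    ∫ ω, H i ω / p i ω * (1 / p i ω - 1) ∂μ = ∫ ω, (H i ω / p i ω - 1) ^ 2 ∂μ := by
  rw [hS.div_mul_one_div_sub_one_eq hi, integral_add (hS.integrable_sq_div_sub_one hi)
    ((hS.memLp_top_div_sub_one hi).integrable le_top), hS.integral_div_sub_one hi, add_zero]

theorem integrable_div_mul_one_div_sub_one [IsFiniteMeasure μ]
    (hS : IsAdaptiveSelection μ ℱ c H p) (hi : 1 ≤ i) :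
    Integrable (fun ω => H i ω / p i ω * (1 / p i ω - 1)) μ := by
  rw [hS.div_mul_one_div_sub_one_eq hi]
  exact (hS.integrable_sq_div_sub_one hi).add ((hS.memLp_top_div_sub_one hi).integrable le_top)

end IsAdaptiveSelection

theorem stmt16_general {Ω : Type*} {m0 : MeasurableSpace Ω} {μ : Measure Ω}
    [IsProbabilityMeasure μ] (ℱ : Filtration ℕ m0)
    (c : ℝ) (hc0 : 0 < c)
    (H p : ℕ → Ω → ℝ)
    (hHmeas : ∀ i, 1 ≤ i → Measurable[ℱ i] (H i))
    (hH01 : ∀ i, 1 ≤ i → ∀ ω, H i ω = 0 ∨ H i ω = 1)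
    (hpmeas : ∀ i, 1 ≤ i → Measurable[ℱ (i - 1)] (p i))
    (hpb : ∀ i, 1 ≤ i → ∀ᵐ ω ∂μ, c ≤ p i ω ∧ p i ω ≤ 1)
    (hcond : ∀ i, 1 ≤ i → μ[H i | ℱ (i - 1)] =ᵐ[μ] p i)
    (m : ℕ) :
    ∫ ω, ∑ i ∈ Finset.Icc 1 m, (H i ω / p i ω) * (1 / p i ω - 1) ∂μ
      = ∫ ω, ((∑ i ∈ Finset.Icc 1 m, H i ω / p i ω)
          - ∫ ω', ∑ i ∈ Finset.Icc 1 m, H i ω' / p i ω' ∂μ) ^ 2 ∂μ := by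
  have hS : IsAdaptiveSelection μ ℱ c H p :=
    ⟨hc0, hHmeas, hH01, hpmeas, fun i hi => (hpb i hi).mono fun _ h => h.1, hcond⟩
  have hone : ∀ i ∈ Icc 1 m, 1 ≤ i := fun i hi => (mem_Icc.mp hi).1
  have hmean : ∫ ω, ∑ i ∈ Icc 1 m, H i ω / p i ω ∂μ = ∑ i ∈ Icc 1 m, (1 : ℝ) := by
    rw [integral_finsetSum _ fun i hi => (hS.memLp_top_div (hone i hi)).integrable le_top]
    exact sum_congr rfl fun i hi => hS.integral_div (hone i hi)
  simp_rw [hmean, ← sum_sub_distrib]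
  rw [integral_finsetSum _ fun i hi => hS.integrable_div_mul_one_div_sub_one (hone i hi),
    integral_sq_sum_eq_sum_integral_sq]
  · exact sum_congr rfl fun i hi => hS.integral_div_mul_one_div_sub_one (hone i hi)
  · exact fun i hi j hj => ((hS.memLp_top_div_sub_one (hone j hj)).mul'
      (hS.memLp_top_div_sub_one (hone i hi))).integrable le_top
  · exact fun i hi j hj => hS.integral_div_sub_one_mul_div_sub_one (hone i hi) (hone j hj)

theorem stmt16 {Ω : Type*} {m0 : MeasurableSpace Ω} {μ : Measure Ω}
    [IsProbabilityMeasure μ] (ℱ : Filtration ℕ m0)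
    (c : ℝ) (hc0 : 0 < c) (hc1 : c ≤ 1)
    (H p : ℕ → Ω → ℝ)
    (hHmeas : ∀ i, 1 ≤ i → Measurable[ℱ i] (H i))
    (hH01 : ∀ i, 1 ≤ i → ∀ ω, H i ω = 0 ∨ H i ω = 1)
    (hpmeas : ∀ i, 1 ≤ i → Measurable[ℱ (i - 1)] (p i))
    (hpb : ∀ i, 1 ≤ i → ∀ᵐ ω ∂μ, c ≤ p i ω ∧ p i ω ≤ 1)
    (hcond : ∀ i, 1 ≤ i → μ[H i | ℱ (i - 1)] =ᵐ[μ] p i)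
    (m : ℕ) (hm : 1 ≤ m) :
    ∫ ω, ∑ i ∈ Finset.Icc 1 m, (H i ω / p i ω) * (1 / p i ω - 1) ∂μ
      = ∫ ω, ((∑ i ∈ Finset.Icc 1 m, H i ω / p i ω)
          - ∫ ω', ∑ i ∈ Finset.Icc 1 m, H i ω' / p i ω' ∂μ) ^ 2 ∂μ :=
  stmt16_general ℱ c hc0 H p hHmeas hH01 hpmeas hpb hcond m
end

section
/- Let T be a finite family of 3-element sets of indices such that any two distinct members of T intersect in at most one index (as is the case for the edge-index sets of distinct triangles of a simple graph), and for τ ∈ T write Ŝ(τ) = ∏_{i∈τ} H_i / p_i. Then E[ ∑_{τ∈T} Ŝ(τ)(Ŝ(τ) − 1) + ∑_{τ ≠ τ' ∈ T, τ ∩ τ' ≠ ∅} Ŝ(τ ∪ τ') · (Ŝ(τ ∩ τ') − 1) ] = Var( ∑_{τ∈T} Ŝ(τ) ); that is, this expression is an unbiased estimator of the variance of the triangle-count estimator N̂_T = ∑_{τ∈T} Ŝ(τ). -/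
open MeasureTheory ProbabilityTheory Finset

/-!
Because `Ŝ(τ) Ŝ(τ') = Ŝ(τ ∪ τ') Ŝ(τ ∩ τ')` and `Ŝ(∅) = 1`, the estimator equals
`N̂² - ∑_{τ, τ'} Ŝ(τ ∪ τ')` pointwise, where `N̂ = ∑_τ Ŝ(τ)`.
Conditioning on `ℱ_{a-1}`, where `a` is the largest index of `J`, and using
`E[Ŝ_a | ℱ_{a-1}] = 1` gives `E[Ŝ(J)] = 1` for every finite `J`. Hence the expectation is
`E[N̂²] - |T|² = E[N̂²] - (E N̂)² = Var N̂`.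
-/

section Algebra

variable {ι R : Type*} [DecidableEq ι] [CommRing R]

def varianceEstimator (s : ι → R) (T : Finset (Finset ι)) : R :=
  (∑ τ ∈ T, (∏ i ∈ τ, s i) * ((∏ i ∈ τ, s i) - 1))
    + ∑ τ ∈ T, ∑ τ' ∈ T,
        if τ ≠ τ' ∧ (τ ∩ τ').Nonempty then
          (∏ i ∈ τ ∪ τ', s i) * ((∏ i ∈ τ ∩ τ', s i) - 1)
        else 0

theorem varianceEstimator_eq (s : ι → R) (T : Finset (Finset ι)) :
    varianceEstimator s T
      = (∑ τ ∈ T, ∏ i ∈ τ, s i) ^ 2 - ∑ τ ∈ T, ∑ τ' ∈ T, ∏ i ∈ τ ∪ τ', s i := by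
  set g : Finset ι → Finset ι → R := fun τ τ' => (∏ i ∈ τ ∪ τ', s i) * ((∏ i ∈ τ ∩ τ', s i) - 1)
  have hg : ∀ τ τ', g τ τ' = (if τ' = τ then g τ τ else 0)
      + if τ ≠ τ' ∧ (τ ∩ τ').Nonempty then g τ τ' else 0 := by
    intro τ τ'
    by_cases heq : τ' = τ
    · simp [heq]
    by_cases hmeet : (τ ∩ τ').Nonempty
    · simp [heq, Ne.symm heq, hmeet]
    · simp [g, heq, not_nonempty_iff_eq_empty.mp hmeet]
  calc varianceEstimator s T
      = ∑ τ ∈ T, ∑ τ' ∈ T, g τ τ' := by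
        simp_rw [varianceEstimator, ← sum_add_distrib]
        refine sum_congr rfl fun τ hτ => ?_
        rw [sum_congr rfl fun τ' _ => hg τ τ', sum_add_distrib, sum_ite_eq' T τ, if_pos hτ]
        simp [g]
    _ = _ := by
        simp_rw [sq, sum_mul_sum, ← sum_sub_distrib, g, mul_sub, mul_one, prod_union_inter]

end Algebra

section Probability

variable {Ω : Type*} {m0 : MeasurableSpace Ω} {μ : Measure Ω}

theorem memLp_prod_of_ae_abs_le [IsFiniteMeasure μ] {ι : Type*} {X : ι → Ω → ℝ} {J : Finset ι}
    {C : ℝ} (q : ENNReal) (hmeas : ∀ i ∈ J, AEStronglyMeasurable (X i) μ)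
    (hbdd : ∀ i ∈ J, ∀ᵐ ω ∂μ, |X i ω| ≤ C) :
    MemLp (fun ω => ∏ i ∈ J, X i ω) q μ := by
  refine .of_bound (Finset.aestronglyMeasurable_fun_prod J hmeas) (C ^ #J) ?_
  filter_upwards [(Filter.eventually_all_finset J).2 hbdd] with ω hω
  calc ‖∏ i ∈ J, X i ω‖ = ∏ i ∈ J, |X i ω| := by rw [Real.norm_eq_abs, abs_prod]
    _ ≤ ∏ _i ∈ J, C := prod_le_prod (fun i _ => abs_nonneg _) hω
    _ = C ^ #J := prod_const C

theorem ae_abs_div_le_inv {f g : Ω → ℝ} {c : ℝ} (hc : 0 < c) (hf : ∀ ω, |f ω| ≤ 1)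
    (hg : ∀ᵐ ω ∂μ, c ≤ g ω) : ∀ᵐ ω ∂μ, |f ω / g ω| ≤ c⁻¹ := by
  filter_upwards [hg] with ω hω
  have hg0 : 0 < g ω := hc.trans_le hω
  rw [abs_div, abs_of_pos hg0, div_le_iff₀ hg0]
  calc |f ω| ≤ 1 := hf ω
    _ ≤ c⁻¹ * g ω := by rw [← div_eq_inv_mul, one_le_div hc]; exact hω

theorem condExp_div_eq_one_s19 {m : MeasurableSpace Ω} {f g : Ω → ℝ} (hg : Measurable[m] g)
    (hf : Integrable f μ) (hfg : Integrable (fun ω => f ω / g ω) μ)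
    (hcond : μ[f | m] =ᵐ[μ] g) (hg0 : ∀ᵐ ω ∂μ, g ω ≠ 0) :
    μ[fun ω => f ω / g ω | m] =ᵐ[μ] 1 := by
  have hdiv : (fun ω => f ω / g ω) = g⁻¹ * f := by
    funext ω; simp [div_eq_inv_mul]
  rw [hdiv] at hfg ⊢
  filter_upwards [condExp_mul_of_stronglyMeasurable_left hg.inv.stronglyMeasurable hfg hf,
    hcond, hg0] with ω hω hcondω hg0ω
  rw [hω, Pi.mul_apply, Pi.inv_apply, hcondω, inv_mul_cancel₀ hg0ω, Pi.one_apply]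

theorem integral_prod_eq_one_of_condExp_eq_one_s19 [IsProbabilityMeasure μ] (ℱ : Filtration ℕ m0)
    {X : ℕ → Ω → ℝ} {C : ℝ} (J : Finset ℕ)
    (hmeas : ∀ i ∈ J, StronglyMeasurable[ℱ i] (X i))
    (hbdd : ∀ i ∈ J, ∀ᵐ ω ∂μ, |X i ω| ≤ C)
    (hcond : ∀ i ∈ J, μ[X i | ℱ (i - 1)] =ᵐ[μ] 1) :
    ∫ ω, ∏ i ∈ J, X i ω ∂μ = 1 := by
  induction J using Finset.induction_on_max with
  | empty => simp
  | insert a J hlt ih =>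
    have hsub : J ⊆ insert a J := subset_insert a J
    have haJ : a ∉ J := fun h => lt_irrefl a (hlt a h)
    set Y : Ω → ℝ := fun ω => ∏ i ∈ J, X i ω
    have hY : StronglyMeasurable[ℱ (a - 1)] Y :=
      Finset.stronglyMeasurable_fun_prod J fun i hi =>
        (hmeas i (hsub hi)).mono (ℱ.mono (by have := hlt i hi; omega))
    have hint : ∀ K ⊆ insert a J, Integrable (fun ω => ∏ i ∈ K, X i ω) μ := fun K hK =>
      (memLp_prod_of_ae_abs_le 1
        (fun i hi => ((hmeas i (hK hi)).mono (ℱ.le i)).aestronglyMeasurable)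
        (fun i hi => hbdd i (hK hi))).integrable le_rfl
    have hYX : Integrable (Y * X a) μ := by
      convert hint (insert a J) subset_rfl using 1
      funext ω; simp [Y, prod_insert haJ, mul_comm]
    calc ∫ ω, ∏ i ∈ insert a J, X i ω ∂μ
        = ∫ ω, μ[Y * X a | ℱ (a - 1)] ω ∂μ := by
          rw [integral_condExp (ℱ.le _)]
          simp [Y, prod_insert haJ, mul_comm]
      _ = ∫ ω, Y ω ∂μ := by
          refine integral_congr_ae ?_
          filter_upwards [condExp_mul_of_stronglyMeasurable_left hY hYX
            (by simpa using hint {a} (by simp)), hcond a (mem_insert_self a J)] with ω hω hcondω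
          simpa [hcondω] using hω
      _ = 1 := ih (fun i hi => hmeas i (hsub hi)) (fun i hi => hbdd i (hsub hi))
          (fun i hi => hcond i (hsub hi))

theorem integral_varianceEstimator_eq_variance [IsProbabilityMeasure μ] {ι : Type*}
    [DecidableEq ι] {s : ι → Ω → ℝ} (T : Finset (Finset ι))
    (hmemLp : ∀ τ ∈ T, MemLp (fun ω => ∏ i ∈ τ, s i ω) 2 μ)
    (hint : ∀ τ ∈ T, ∀ τ' ∈ T, Integrable (fun ω => ∏ i ∈ τ ∪ τ', s i ω) μ)
    (hone : ∀ τ ∈ T, ∀ τ' ∈ T, ∫ ω, ∏ i ∈ τ ∪ τ', s i ω ∂μ = 1) :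
    ∫ ω, varianceEstimator (fun i => s i ω) T ∂μ
      = Var[fun ω => ∑ τ ∈ T, ∏ i ∈ τ, s i ω; μ] := by
  have hN : MemLp (fun ω => ∑ τ ∈ T, ∏ i ∈ τ, s i ω) 2 μ := memLp_finsetSum T hmemLp
  have hmean : ∫ ω, ∑ τ ∈ T, ∏ i ∈ τ, s i ω ∂μ = #T := by
    rw [integral_finsetSum T fun τ hτ => by simpa using hint τ hτ τ hτ]
    rw [sum_congr rfl fun τ hτ => by simpa using hone τ hτ τ hτ, sum_const, nsmul_one]
  simp only [varianceEstimator_eq]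
  rw [integral_sub hN.integrable_sq (integrable_finsetSum T fun τ hτ =>
      integrable_finsetSum T fun τ' hτ' => hint τ hτ τ' hτ'), variance_eq_sub hN,
    integral_finsetSum T fun τ hτ => integrable_finsetSum T fun τ' hτ' => hint τ hτ τ' hτ']
  simp +contextual [integral_finsetSum, hint, hone, hmean, sq]

end Probability

theorem stmt19_general {Ω : Type*} {m0 : MeasurableSpace Ω} {μ : Measure Ω}
    [IsProbabilityMeasure μ] (ℱ : Filtration ℕ m0)
    (c : ℝ) (hc0 : 0 < c)
    (H p : ℕ → Ω → ℝ)
    (hHmeas : ∀ i, 1 ≤ i → Measurable[ℱ i] (H i))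
    (hH01 : ∀ i, 1 ≤ i → ∀ ω, H i ω = 0 ∨ H i ω = 1)
    (hpmeas : ∀ i, 1 ≤ i → Measurable[ℱ (i - 1)] (p i))
    (hpb : ∀ i, 1 ≤ i → ∀ᵐ ω ∂μ, c ≤ p i ω ∧ p i ω ≤ 1)
    (hcond : ∀ i, 1 ≤ i → μ[H i | ℱ (i - 1)] =ᵐ[μ] p i)
    (T : Finset (Finset ℕ))
    (hT1 : ∀ τ ∈ T, ∀ i ∈ τ, 1 ≤ i) :
    ∫ ω, ((∑ τ ∈ T, (∏ i ∈ τ, H i ω / p i ω) * ((∏ i ∈ τ, H i ω / p i ω) - 1))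
        + ∑ τ ∈ T, ∑ τ' ∈ T,
            (if τ ≠ τ' ∧ (τ ∩ τ').Nonempty then
              (∏ i ∈ τ ∪ τ', H i ω / p i ω) * ((∏ i ∈ τ ∩ τ', H i ω / p i ω) - 1)
            else 0)) ∂μ
      = ∫ ω, ((∑ τ ∈ T, ∏ i ∈ τ, H i ω / p i ω)
          - ∫ ω', ∑ τ ∈ T, ∏ i ∈ τ, H i ω' / p i ω' ∂μ) ^ 2 ∂μ := by
  have hmeas : ∀ i, 1 ≤ i → Measurable[ℱ i] (fun ω => H i ω / p i ω) := fun i hi =>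
    (hHmeas i hi).div ((hpmeas i hi).mono (ℱ.mono (Nat.sub_le i 1)) le_rfl)
  have hHbdd : ∀ i, 1 ≤ i → ∀ ω, |H i ω| ≤ 1 := fun i hi ω => by
    rcases hH01 i hi ω with h | h <;> simp [h]
  have hbdd : ∀ i, 1 ≤ i → ∀ᵐ ω ∂μ, |H i ω / p i ω| ≤ c⁻¹ := fun i hi =>
    ae_abs_div_le_inv hc0 (hHbdd i hi) ((hpb i hi).mono fun _ h => h.1)
  have hcondS : ∀ i, 1 ≤ i → μ[fun ω => H i ω / p i ω | ℱ (i - 1)] =ᵐ[μ] 1 := fun i hi =>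
    condExp_div_eq_one_s19 (hpmeas i hi)
      (.of_bound ((hHmeas i hi).mono (ℱ.le i) le_rfl).aestronglyMeasurable 1
        (.of_forall (hHbdd i hi)))
      (.of_bound ((hmeas i hi).mono (ℱ.le i) le_rfl).aestronglyMeasurable c⁻¹ (hbdd i hi))
      (hcond i hi) ((hpb i hi).mono fun _ h => (hc0.trans_le h.1).ne')
  have hprod : ∀ J : Finset ℕ, (∀ i ∈ J, 1 ≤ i) →
      MemLp (fun ω => ∏ i ∈ J, H i ω / p i ω) 2 μ ∧ ∫ ω, ∏ i ∈ J, H i ω / p i ω ∂μ = 1 :=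
    fun J hJ => ⟨memLp_prod_of_ae_abs_le 2
      (fun i hi => ((hmeas i (hJ i hi)).mono (ℱ.le i) le_rfl).aestronglyMeasurable)
      (fun i hi => hbdd i (hJ i hi)),
      integral_prod_eq_one_of_condExp_eq_one_s19 ℱ J
        (fun i hi => (hmeas i (hJ i hi)).stronglyMeasurable) (fun i hi => hbdd i (hJ i hi))
        (fun i hi => hcondS i (hJ i hi))⟩
  have hunion : ∀ τ ∈ T, ∀ τ' ∈ T, ∀ i ∈ τ ∪ τ', 1 ≤ i := fun τ hτ τ' hτ' i hi =>
    (mem_union.1 hi).elim (hT1 τ hτ i) (hT1 τ' hτ' i)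
  rw [← variance_eq_integral (memLp_finsetSum T fun τ hτ => (hprod τ (hT1 τ hτ)).1).aemeasurable]
  exact integral_varianceEstimator_eq_variance T (fun τ hτ => (hprod τ (hT1 τ hτ)).1)
    (fun τ hτ τ' hτ' => (hprod _ (hunion τ hτ τ' hτ')).1.integrable one_le_two)
    (fun τ hτ τ' hτ' => (hprod _ (hunion τ hτ τ' hτ')).2)

theorem stmt19 {Ω : Type*} {m0 : MeasurableSpace Ω} {μ : Measure Ω}
    [IsProbabilityMeasure μ] (ℱ : Filtration ℕ m0)
    (c : ℝ) (hc0 : 0 < c) (hc1 : c ≤ 1)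
    (H p : ℕ → Ω → ℝ)
    (hHmeas : ∀ i, 1 ≤ i → Measurable[ℱ i] (H i))
    (hH01 : ∀ i, 1 ≤ i → ∀ ω, H i ω = 0 ∨ H i ω = 1)
    (hpmeas : ∀ i, 1 ≤ i → Measurable[ℱ (i - 1)] (p i))
    (hpb : ∀ i, 1 ≤ i → ∀ᵐ ω ∂μ, c ≤ p i ω ∧ p i ω ≤ 1)
    (hcond : ∀ i, 1 ≤ i → μ[H i | ℱ (i - 1)] =ᵐ[μ] p i)
    (T : Finset (Finset ℕ))
    (hT3 : ∀ τ ∈ T, τ.card = 3)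
    (hT1 : ∀ τ ∈ T, ∀ i ∈ τ, 1 ≤ i)
    (hTint : ∀ τ ∈ T, ∀ τ' ∈ T, τ ≠ τ' → (τ ∩ τ').card ≤ 1) :
    ∫ ω, ((∑ τ ∈ T, (∏ i ∈ τ, H i ω / p i ω) * ((∏ i ∈ τ, H i ω / p i ω) - 1))
        + ∑ τ ∈ T, ∑ τ' ∈ T,
            (if τ ≠ τ' ∧ (τ ∩ τ').Nonempty then
              (∏ i ∈ τ ∪ τ', H i ω / p i ω) * ((∏ i ∈ τ ∩ τ', H i ω / p i ω) - 1)
            else 0)) ∂μ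
      = ∫ ω, ((∑ τ ∈ T, ∏ i ∈ τ, H i ω / p i ω)
          - ∫ ω', ∑ τ ∈ T, ∏ i ∈ τ, H i ω' / p i ω' ∂μ) ^ 2 ∂μ :=
  stmt19_general ℱ c hc0 H p hHmeas hH01 hpmeas hpb hcond T hT1
end
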